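/- Let E and G be finite nonempty sets, u : E × G → E a map, q a probability vector on G, λ > 0, t ≥ 0 and k ∈ E. Let (Ω, 𝓕, ℙ) be a probability space carrying an i.i.d. sequence (Y_n)_{n≥1} of G-valued random variables with distribution q and an ℕ-valued random variable N which is independent of the sequence (Y_n) and has Poisson distribution with parameter λt. Define X_0 = k, X_n = u(X_{n−1}, Y_n). Then for every f : E → ℝ, E[f(X_N)] = ∑_{j∈E} (exp(tR))_{kj} f(j), where R = λ(P − I) and P is the stochastic matrix with entries P_{ij} = ∑_{g∈G, u(i,g)=j} q_g. -/

import Mathlib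

/-! `X m` is a function of `Y 0, …, Y (m - 1)` only, so it is independent of `Y m` and, since
`N` is independent of the whole sequence, also of `N`. The first independence gives the Markov
step `E[φ (X (m + 1))] = E[(P φ) (X m)]`, hence `E[φ (X m)] = (P ^ m φ) k`; the second lets one
split along `{N = m}`, so `E[f (X N)] = ∑ₘ e^{-λt} (λt)^m / m! (P ^ m f) k`. This is the
exponential series of `e^{-λt} exp (λt P) = exp (λt (P - 1))` applied to `f`. -/

open MeasureTheory ProbabilityTheory
open scoped Matrix

namespace Matrix
variable {ι : Type*} [Fintype ι] [DecidableEq ι]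

theorem exp_smul_sub_one (A : Matrix ι ι ℝ) (r : ℝ) :
    NormedSpace.exp (r • (A - 1)) = Real.exp (-r) • NormedSpace.exp (r • A) := by
  have hsplit : r • (A - 1) = algebraMap ℝ (Matrix ι ι ℝ) (-r) + r • A := by
    rw [Algebra.algebraMap_eq_smul_one, smul_sub, neg_smul, sub_eq_neg_add]
  have hscalar : NormedSpace.exp (algebraMap ℝ (Matrix ι ι ℝ) (-r)) =
      algebraMap ℝ (Matrix ι ι ℝ) (Real.exp (-r)) := by
    rw [Real.exp_eq_exp_ℝ]
    open scoped Norms.Operator in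
    exact (NormedSpace.algebraMap_exp_comm (-r)).symm
  rw [hsplit, exp_add_of_commute _ _ (Algebra.commute_algebraMap_left _ _), hscalar,
    Algebra.algebraMap_eq_smul_one, smul_one_mul]

theorem hasSum_exp (A : Matrix ι ι ℝ) :
    HasSum (fun n => (n.factorial⁻¹ : ℝ) • A ^ n) (NormedSpace.exp A) :=
  open scoped Norms.Operator in NormedSpace.exp_series_hasSum_exp' A

theorem hasSum_poisson_smul_pow_mulVec (A : Matrix ι ι ℝ) (r : ℝ) (v : ι → ℝ) :
    HasSum (fun n : ℕ => (Real.exp (-r) * r ^ n / n.factorial) • (A ^ n *ᵥ v))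
      (NormedSpace.exp (r • (A - 1)) *ᵥ v) := by
  have h := ((hasSum_exp (r • A)).map (mulVec.addMonoidHomLeft v)
    (continuous_id.matrix_mulVec continuous_const)).const_smul (Real.exp (-r))
  rw [exp_smul_sub_one, smul_mulVec]
  convert h using 2 with n
  · simp only [Function.comp_apply, mulVec.addMonoidHomLeft, AddMonoidHom.coe_mk, ZeroHom.coe_mk,
      smul_pow, smul_mulVec, smul_smul]
    ring_nf
  · rfl

end Matrix

section FiniteValued

variable {Ω E G : Type*} [MeasurableSpace Ω] {μ : Measure Ω} [IsFiniteMeasure μ]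
  [Fintype E] [MeasurableSpace E] [MeasurableSingletonClass E]
  [Fintype G] [MeasurableSpace G] [MeasurableSingletonClass G]

theorem integral_comp_eq_sum_measureReal {Z : Ω → E} (hZ : Measurable Z) (φ : E → ℝ) :
    ∫ ω, φ (Z ω) ∂μ = ∑ i, μ.real (Z ⁻¹' {i}) * φ i := by
  rw [← integral_map hZ.aemeasurable (measurable_of_finite φ).aestronglyMeasurable,
    integral_fintype .of_finite]
  simp only [map_measureReal_apply hZ (measurableSet_singleton _), smul_eq_mul]

theorem ProbabilityTheory.IndepFun.integral_comp_eq_integral_sum {Z : Ω → E} {W : Ω → G}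
    (hZW : IndepFun Z W μ) (hZ : Measurable Z) (hW : Measurable W) (h : E × G → ℝ) :
    ∫ ω, h (Z ω, W ω) ∂μ = ∫ ω, ∑ g, μ.real (W ⁻¹' {g}) * h (Z ω, g) ∂μ := by
  rw [integral_comp_eq_sum_measureReal (hZ.prodMk hW),
    integral_comp_eq_sum_measureReal hZ (fun i => ∑ g, μ.real (W ⁻¹' {g}) * h (i, g)),
    Fintype.sum_prod_type]
  refine Finset.sum_congr rfl fun i _ => ?_
  rw [Finset.mul_sum]
  refine Finset.sum_congr rfl fun g _ => ?_
  have hfiber : (fun ω => (Z ω, W ω)) ⁻¹' {(i, g)} = Z ⁻¹' {i} ∩ W ⁻¹' {g} := by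
    ext; simp
  rw [hfiber, measureReal_def, hZW.measure_inter_preimage_eq_mul _ _ (measurableSet_singleton i)
    (measurableSet_singleton g), ENNReal.toReal_mul, ← measureReal_def, ← measureReal_def]
  ring

end FiniteValued

theorem hasSum_integral_randomIndex {Ω : Type*} [MeasurableSpace Ω] {μ : Measure Ω}
    [IsFiniteMeasure μ] {N : Ω → ℕ} (hN : Measurable N) {Z : ℕ → Ω → ℝ}
    (hZ : ∀ m, Measurable (Z m)) (hind : ∀ m, IndepFun N (Z m) μ) {C : ℝ}
    (hC : ∀ m ω, |Z m ω| ≤ C) :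
    HasSum (fun m => μ.real (N ⁻¹' {m}) * ∫ ω, Z m ω ∂μ) (∫ ω, Z (N ω) ω ∂μ) := by
  have hmeas : Measurable fun ω => Z (N ω) ω :=
    (measurable_from_prod_countable_left (f := fun p : Ω × ℕ => Z p.2 p.1) hZ).comp
      (measurable_id.prodMk hN)
  have hint : Integrable (fun ω => Z (N ω) ω) μ :=
    .of_bound hmeas.aestronglyMeasurable C (ae_of_all _ fun ω => hC _ ω)
  have h := hasSum_integral_iUnion (fun m => hN (measurableSet_singleton m))
    (pairwise_disjoint_fiber N) hint.integrableOn
  rw [← Set.preimage_iUnion, Set.iUnion_of_singleton, Set.preimage_univ, setIntegral_univ] at h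
  have hterm : ∀ m, ∫ ω in N ⁻¹' {m}, Z (N ω) ω ∂μ = μ.real (N ⁻¹' {m}) * ∫ ω, Z m ω ∂μ := by
    intro m
    rw [setIntegral_congr_fun (hN (measurableSet_singleton m))
      fun ω hω => by rw [show N ω = m from hω]]
    exact Indep.setIntegral_eq_mul (X := Z m) (f := id) hN.comap_le
      ((IndepFun_iff_Indep _ _ _).1 (hind m)) (hZ m).aemeasurable
      ⟨{m}, measurableSet_singleton m, rfl⟩ aestronglyMeasurable_id
  simpa only [hterm] using h

def transitionMatrix {E G : Type*} [Fintype G] [DecidableEq E] (u : E × G → E) (q : G → ℝ) :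
    Matrix E E ℝ :=
  Matrix.of fun i j => ∑ g, if u (i, g) = j then q g else 0

theorem transitionMatrix_mulVec {E G : Type*} [Fintype E] [Fintype G] [DecidableEq E]
    (u : E × G → E) (q : G → ℝ) (φ : E → ℝ) (i : E) :
    (transitionMatrix u q *ᵥ φ) i = ∑ g, q g * φ (u (i, g)) := by
  simp only [Matrix.mulVec, dotProduct, transitionMatrix, Matrix.of_apply, Finset.sum_mul,
    ite_mul, zero_mul]
  rw [Finset.sum_comm]
  simp

section Recursion

variable {Ω E G : Type*} [MeasurableSpace E] [MeasurableSpace G] {u : E × G → E}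
  {Y : ℕ → Ω → G} {X : ℕ → Ω → E} {k : E}

theorem measurable_of_recursion (hX0 : ∀ ω, X 0 ω = k)
    (hX : ∀ n ω, X (n + 1) ω = u (X n ω, Y n ω)) (hu : Measurable u) {mΩ : MeasurableSpace Ω}
    {m : ℕ} (hY : ∀ i < m, Measurable[mΩ] (Y i)) : Measurable[mΩ] (X m) := by
  induction m with
  | zero => simpa only [funext hX0] using measurable_const
  | succ m ih =>
    rw [funext (hX m)]
    exact hu.comp ((ih fun i hi => hY i (by omega)).prodMk (hY m (by omega)))

variable [MeasurableSpace Ω] {μ : Measure Ω}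

theorem indepFun_of_recursion_of_iIndepFun (hX0 : ∀ ω, X 0 ω = k)
    (hX : ∀ n ω, X (n + 1) ω = u (X n ω, Y n ω)) (hu : Measurable u)
    (hYmeas : ∀ n, Measurable (Y n)) (hYindep : iIndepFun Y μ) (m : ℕ) :
    IndepFun (X m) (Y m) μ := by
  have h := indep_iSup_of_disjoint (fun i => (hYmeas i).comap_le) hYindep
    (S := Set.Iio m) (T := {m}) (by simp)
  rw [iSup_singleton] at h
  refine (IndepFun_iff_Indep _ _ _).2 (indep_of_indep_of_le_left h ?_)
  refine (measurable_of_recursion hX0 hX hu fun i hi => ?_).comap_le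
  exact Measurable.of_comap_le (le_iSup₂_of_le i hi le_rfl)

theorem indepFun_of_recursion_of_indepFun_seq {β : Type*} [MeasurableSpace β] {N : Ω → β}
    (hX0 : ∀ ω, X 0 ω = k) (hX : ∀ n ω, X (n + 1) ω = u (X n ω, Y n ω)) (hu : Measurable u)
    (hN : IndepFun N (fun ω (n : ℕ) => Y n ω) μ) (m : ℕ) : IndepFun N (X m) μ := by
  refine (IndepFun_iff_Indep _ _ _).2 (indep_of_indep_of_le_right
    ((IndepFun_iff_Indep _ _ _).1 hN) (measurable_of_recursion hX0 hX hu fun i _ => ?_).comap_le)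
  exact (measurable_pi_apply i).comp (comap_measurable fun ω (n : ℕ) => Y n ω)

theorem integral_comp_of_recursion_eq_pow_mulVec [Fintype E] [DecidableEq E]
    [MeasurableSingletonClass E] [Fintype G] [MeasurableSingletonClass G] [IsProbabilityMeasure μ]
    (hX0 : ∀ ω, X 0 ω = k) (hX : ∀ n ω, X (n + 1) ω = u (X n ω, Y n ω))
    (hYmeas : ∀ n, Measurable (Y n)) (hYindep : iIndepFun Y μ) {q : G → ℝ}
    (hYlaw : ∀ n g, μ.real (Y n ⁻¹' {g}) = q g) (m : ℕ) (φ : E → ℝ) :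
    ∫ ω, φ (X m ω) ∂μ = (transitionMatrix u q ^ m *ᵥ φ) k := by
  have hu : Measurable u := measurable_of_finite u
  have hXmeas : ∀ n, Measurable (X n) := fun n =>
    measurable_of_recursion hX0 hX hu fun i _ => hYmeas i
  induction m generalizing φ with
  | zero => simp [hX0]
  | succ m ih =>
    calc ∫ ω, φ (X (m + 1) ω) ∂μ
        = ∫ ω, ∑ g, μ.real (Y m ⁻¹' {g}) * φ (u (X m ω, g)) ∂μ := by
          simp_rw [hX]
          exact (indepFun_of_recursion_of_iIndepFun hX0 hX hu hYmeas hYindep m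
            ).integral_comp_eq_integral_sum (hXmeas m) (hYmeas m) (φ ∘ u)
      _ = ∫ ω, (transitionMatrix u q *ᵥ φ) (X m ω) ∂μ := by
          simp only [hYlaw, transitionMatrix_mulVec]
      _ = (transitionMatrix u q ^ (m + 1) *ᵥ φ) k := by
          rw [ih, Matrix.mulVec_mulVec, pow_succ]

end Recursion

theorem stmt7_general {E G : Type*} [Fintype E] [Fintype G]
    [DecidableEq E]
    [mG : MeasurableSpace G] [MeasurableSingletonClass G]
    (u : E × G → E) (q : G → ℝ) (hq0 : ∀ g, 0 ≤ q g)
    (l t : ℝ) (hl : 0 < l) (ht : 0 ≤ t) (k : E)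
    {Ω : Type*} [MeasurableSpace Ω] (μ : Measure Ω) [IsProbabilityMeasure μ]
    (Y : ℕ → Ω → G) (hYmeas : ∀ n, Measurable (Y n))
    (hYindep : iIndepFun Y μ)
    (hYlaw : ∀ n g, μ {ω | Y n ω = g} = ENNReal.ofReal (q g))
    (N : Ω → ℕ) (hNmeas : Measurable N)
    (hNindep : IndepFun N (fun ω (n : ℕ) => Y n ω) μ)
    (hNlaw : ∀ m : ℕ, μ {ω | N ω = m}
      = ENNReal.ofReal (Real.exp (-(l * t)) * (l * t) ^ m / m.factorial))
    (X : ℕ → Ω → E) (hX0 : ∀ ω, X 0 ω = k)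
    (hX : ∀ n ω, X (n + 1) ω = u (X n ω, Y n ω)) :
    ∀ f : E → ℝ,
      ∫ ω, f (X (N ω) ω) ∂μ =
        ∑ j, (NormedSpace.exp
          (t • (l • ((Matrix.of fun i j' => ∑ g, if u (i, g) = j' then q g else 0) - 1))))
            k j * f j := by
  intro f
  let _ : MeasurableSpace E := ⊤
  have : DiscreteMeasurableSpace E := ⟨fun _ => trivial⟩
  have hu : Measurable u := measurable_of_finite u
  have hXmeas : ∀ m, Measurable (X m) := fun m =>
    measurable_of_recursion hX0 hX hu fun i _ => hYmeas i
  have hYlaw' : ∀ n g, μ.real (Y n ⁻¹' {g}) = q g := fun n g =>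
    (congrArg ENNReal.toReal (hYlaw n g)).trans (ENNReal.toReal_ofReal (hq0 g))
  have hNlaw' : ∀ m : ℕ, μ.real (N ⁻¹' {m}) = Real.exp (-(l * t)) * (l * t) ^ m / m.factorial :=
    fun m => (congrArg ENNReal.toReal (hNlaw m)).trans (ENNReal.toReal_ofReal (by positivity))
  have hsum := hasSum_integral_randomIndex hNmeas (Z := fun m ω => f (X m ω))
    (fun m => (measurable_of_finite f).comp (hXmeas m))
    (fun m => (indepFun_of_recursion_of_indepFun_seq hX0 hX hu hNindep m).comp measurable_id
      (measurable_of_finite f))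
    (C := ∑ j, |f j|) fun m ω => Finset.single_le_sum (f := fun j => |f j|)
      (fun j _ => abs_nonneg _) (Finset.mem_univ _)
  simp only [hNlaw', integral_comp_of_recursion_eq_pow_mulVec hX0 hX hYmeas hYindep hYlaw'] at hsum
  rw [smul_smul, mul_comm t l]
  exact hsum.unique ((Pi.hasSum.1 (Matrix.hasSum_poisson_smul_pow_mulVec _ _ f)) k)

/-- In the setting of Statement 5, let moreover `N` be a Poisson random
variable of parameter `λ t`, independent of the whole sequence `(Y_n)`.  Then
`E[f (X_N)] = ∑ j, (exp (t R))_{k j} f j`, where `R = λ (P − I)` and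
`P i j = ∑_{g : u(i,g) = j} q g`. -/
theorem stmt7 {E G : Type*} [Fintype E] [Fintype G] [Nonempty E] [Nonempty G]
    [DecidableEq E] [DecidableEq G]
    [mG : MeasurableSpace G] [MeasurableSingletonClass G]
    (u : E × G → E) (q : G → ℝ) (hq0 : ∀ g, 0 ≤ q g) (hq1 : ∑ g, q g = 1)
    (l t : ℝ) (hl : 0 < l) (ht : 0 ≤ t) (k : E)
    {Ω : Type*} [MeasurableSpace Ω] (μ : Measure Ω) [IsProbabilityMeasure μ]
    (Y : ℕ → Ω → G) (hYmeas : ∀ n, Measurable (Y n))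
    (hYindep : iIndepFun Y μ)
    (hYlaw : ∀ n g, μ {ω | Y n ω = g} = ENNReal.ofReal (q g))
    (N : Ω → ℕ) (hNmeas : Measurable N)
    (hNindep : IndepFun N (fun ω (n : ℕ) => Y n ω) μ)
    (hNlaw : ∀ m : ℕ, μ {ω | N ω = m}
      = ENNReal.ofReal (Real.exp (-(l * t)) * (l * t) ^ m / m.factorial))
    (X : ℕ → Ω → E) (hX0 : ∀ ω, X 0 ω = k)
    (hX : ∀ n ω, X (n + 1) ω = u (X n ω, Y n ω)) :
    ∀ f : E → ℝ,
      ∫ ω, f (X (N ω) ω) ∂μ =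
        ∑ j, (NormedSpace.exp
          (t • (l • ((Matrix.of fun i j' => ∑ g, if u (i, g) = j' then q g else 0) - 1))))
            k j * f j :=
  stmt7_general (mG := mG) u q hq0 l t hl ht k μ Y hYmeas hYindep hYlaw N hNmeas hNindep hNlaw X hX0
    hX
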